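/- For every n ≥ 0, the number of planar rooted trees with 2n+1 leaves that are invariant under the dendriform involution equals the super Catalan number C_n, i.e., |{t ∈ T_{2n} : t = t†}| = |T_n|. -/

import Mathlib

inductive PTree : Type where
  | leaf : PTree
  | node : List PTree → PTree

inductive Valid : PTree → Prop where
  | leaf : Valid .leaf
  | node : ∀ ts : List PTree, 2 ≤ ts.length → (∀ t ∈ ts, Valid t) → Valid (.node ts)

def leaves : PTree → ℕ
  | .leaf => 1
  | .node ts => (ts.attach.map (fun x => leaves x.1)).sum
decreasing_by
  simp_wf
  have := List.sizeOf_lt_of_mem x.2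
  omega

def dag : PTree → PTree
  | .leaf => .leaf
  | .node ts => .node ((ts.attach.map (fun x => dag x.1)).reverse)
decreasing_by
  simp_wf
  have := List.sizeOf_lt_of_mem x.2
  omega

/-- `up t r` grafts the root of `t` onto the leftmost leaf of `r`. -/
def up (t : PTree) : PTree → PTree
  | .leaf => t
  | .node [] => .node []
  | .node (r :: rs) => .node (up t r :: rs)

mutual
/-- `down t r` grafts the root of `r` onto the rightmost leaf of `t`. -/
def down : PTree → PTree → PTree
  | .leaf, r => r
  | .node ts, r => .node (downList ts r)

def downList : List PTree → PTree → List PTree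
  | [], _ => []
  | [t], r => [down t r]
  | t :: t' :: ts, r => t :: downList (t' :: ts) r
end

lemma dag_node (ts : List PTree) : dag (.node ts) = .node ((ts.map dag).reverse) := by
  rw [dag]; simp [List.attach_map_val]

lemma leaves_node (ts : List PTree) : leaves (.node ts) = (ts.map leaves).sum := by
  rw [leaves]; simp [List.attach_map_val]

lemma dag_leaf : dag .leaf = .leaf := by rw [dag]

lemma leaves_leaf : leaves .leaf = 1 := by rw [leaves]

lemma sizeOf_node (ts : List PTree) : sizeOf (PTree.node ts) = 1 + sizeOf ts := by simp

lemma ptree_ind (P : PTree → Prop) (hleaf : P .leaf)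
    (hnode : ∀ ts, (∀ t ∈ ts, P t) → P (.node ts)) : ∀ t, P t := by
  have key : ∀ N (t : PTree), sizeOf t ≤ N → P t := by
    intro N
    induction N with
    | zero => intro t h; exfalso; cases t <;> simp at h
    | succ N ih =>
      intro t h
      cases t with
      | leaf => exact hleaf
      | node ts =>
        refine hnode ts fun x hx => ih x ?_
        have h1 := List.sizeOf_lt_of_mem hx
        have h2 := sizeOf_node ts
        omega
  exact fun t => key (sizeOf t) t le_rfl

lemma dag_dag : ∀ t, dag (dag t) = t := by
  refine ptree_ind _ (by rw [dag_leaf, dag_leaf]) ?_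
  intro ts ih
  simp only [dag_node, List.map_reverse, List.reverse_reverse, List.map_map]
  congr 1
  conv_rhs => rw [← List.map_id ts]
  exact List.map_congr_left ih

lemma leaves_dag : ∀ t, leaves (dag t) = leaves t := by
  refine ptree_ind _ (by rw [dag_leaf]) ?_
  intro ts ih
  simp only [dag_node, leaves_node, List.map_reverse, List.sum_reverse, List.map_map]
  congr 1
  exact List.map_congr_left fun x hx => ih x hx

lemma valid_dag : ∀ t, Valid t → Valid (dag t) := by
  refine ptree_ind _ (fun _ => by rw [dag_leaf]; exact Valid.leaf) ?_
  intro ts ih hv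
  cases hv with
  | node _ hlen hall =>
    rw [dag_node]
    refine Valid.node _ (by simpa using hlen) ?_
    intro x hx
    simp only [List.mem_reverse, List.mem_map] at hx
    obtain ⟨y, hy, rfl⟩ := hx
    exact ih y hy (hall y hy)

def phi : PTree → PTree
  | .leaf => .leaf
  | .node ts => .node (ts.take (ts.length / 2) ++ [phi (ts.getD (ts.length / 2) .leaf)])
decreasing_by
  simp_wf
  rcases lt_or_ge (ts.length / 2) ts.length with h | h
  · rw [List.getElem?_eq_getElem h]
    have := List.sizeOf_lt_of_mem (ts.getElem_mem h)
    simp only [Option.getD_some]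
    omega
  · rw [List.getElem?_eq_none h]
    have : 1 ≤ sizeOf ts := by cases ts <;> simp <;> omega
    simp only [Option.getD_none]
    simp
    omega

def psi : PTree → PTree
  | .leaf => .leaf
  | .node ts =>
      .node (ts.dropLast ++ [psi (ts.getLast?.getD .leaf)] ++ (ts.dropLast.map dag).reverse)
decreasing_by
  simp_wf
  cases ts with
  | nil => simp
  | cons a l =>
    have hne : a :: l ≠ [] := by simp
    rw [List.getLast?_eq_getLast hne]
    have := List.sizeOf_lt_of_mem (List.getLast_mem hne)
    simp only [Option.getD_some]
    omega

lemma phi_leaf : phi .leaf = .leaf := by rw [phi]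
lemma phi_node (ts : List PTree) :
    phi (.node ts) = .node (ts.take (ts.length / 2) ++ [phi (ts.getD (ts.length / 2) .leaf)]) := by
  rw [phi]
lemma psi_leaf : psi .leaf = .leaf := by rw [psi]
lemma psi_node (ts : List PTree) :
    psi (.node ts) =
      .node (ts.dropLast ++ [psi (ts.getLast?.getD .leaf)] ++ (ts.dropLast.map dag).reverse) := by
  rw [psi]

lemma hld (l : List PTree) : ((l.map dag).reverse.map leaves).sum = (l.map leaves).sum := by
  rw [List.map_reverse, List.sum_reverse, List.map_map]
  rw [show leaves ∘ dag = leaves from funext leaves_dag]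

lemma claimA : ∀ t, Valid t → dag t = t → Odd (leaves t) →
    Valid (phi t) ∧ 2 * leaves (phi t) = leaves t + 1 ∧ psi (phi t) = t := by
  refine ptree_ind _ ?_ ?_
  · intro _ _ _
    exact ⟨by rw [phi_leaf]; exact Valid.leaf, by rw [phi_leaf, leaves_leaf],
      by rw [phi_leaf, psi_leaf]⟩
  · intro ts ih hv hsym hodd
    cases hv with
    | node _ hlen hall =>
    rw [dag_node] at hsym
    injection hsym with hts
    set k := ts.length with hk
    set m := k / 2 with hm
    -- odd length
    have hkodd : k = 2 * m + 1 := by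
      by_contra hc
      have hke : k = 2 * m := by omega
      set A := ts.take m with hA
      set B := ts.drop m with hB
      have hsplit : ts = A ++ B := (List.take_append_drop m ts).symm
      have hlA : A.length = m := by simp [hA, ← hk]; omega
      have hlB : B.length = m := by simp [hB, ← hk]; omega
      have hts2 : (B.map dag).reverse ++ (A.map dag).reverse = A ++ B := by
        have := hts
        rw [hsplit] at this
        simpa [List.map_append, List.reverse_append] using this
      have hinj := List.append_inj hts2 (by simp [hlA, hlB])
      have hAB : (B.map dag).reverse = A := hinj.1
      have hsums : (A.map leaves).sum = (B.map leaves).sum := by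
        rw [← hAB]; exact hld B
      have hlv : leaves (.node ts) = (A.map leaves).sum + (B.map leaves).sum := by
        rw [leaves_node, hsplit]; simp
      rw [hlv, hsums] at hodd
      rcases hodd with ⟨j, hj⟩
      omega
    have hmlt : m < k := by omega
    have hm1 : 1 ≤ m := by omega
    set s := ts[m]'(by rw [← hk]; omega) with hs
    set A := ts.take m with hA
    set B := ts.drop (m + 1) with hB
    have hlA : A.length = m := by simp [hA, ← hk]; omega
    have hlB : B.length = m := by simp [hB, ← hk]; omega
    have hsplit : ts = A ++ s :: B := by
      conv_lhs => rw [← List.take_append_drop m ts]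
      rw [List.drop_eq_getElem_cons (by rw [← hk]; omega)]
    have hts2 : ((B.map dag).reverse ++ [dag s]) ++ (A.map dag).reverse
        = (A ++ [s]) ++ B := by
      have := hts
      rw [hsplit] at this
      simp only [List.map_append, List.map_cons, List.map_nil, List.reverse_append,
        List.reverse_cons, List.reverse_nil, List.nil_append, List.append_assoc,
        List.singleton_append, List.cons_append] at this ⊢
      exact this
    have hinj := List.append_inj hts2 (by simp [hlA, hlB])
    have hinj2 := List.append_inj hinj.1 (by simp [hlA, hlB])
    have hBA : (B.map dag).reverse = A := hinj2.1
    have hds : dag s = s := by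
      have := hinj2.2
      simpa using this
    have hAB : (A.map dag).reverse = B := hinj.2
    have hsmem : s ∈ ts := List.getElem_mem _
    have hsumB : (B.map leaves).sum = (A.map leaves).sum := by
      rw [← hAB]; exact hld A
    have hlv : leaves (.node ts) = 2 * (A.map leaves).sum + leaves s := by
      rw [leaves_node, hsplit]
      simp [List.sum_append, hsumB]
      ring
    have hsodd : Odd (leaves s) := by
      rcases hodd with ⟨j, hj⟩
      rw [hlv] at hj
      exact ⟨j - (A.map leaves).sum, by omega⟩
    obtain ⟨ihv, ihl, ihp⟩ := ih s hsmem (hall s hsmem) hds hsodd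
    have hgetD : ts.getD (ts.length / 2) .leaf = s := by
      rw [List.getD_eq_getElem _ _ (by rw [← hk]; omega)]
    have hphi : phi (.node ts) = .node (A ++ [phi s]) := by
      rw [phi_node, hgetD, ← hk, ← hm, ← hA]
    refine ⟨?_, ?_, ?_⟩
    · rw [hphi]
      refine Valid.node _ (by simp [hlA]; omega) ?_
      intro x hx
      rcases List.mem_append.mp hx with h | h
      · exact hall x (List.take_subset m ts h)
      · simp at h; subst h; exact ihv
    · rw [hphi, leaves_node, hlv]
      simp [List.sum_append]
      omega
    · rw [hphi, psi_node]
      rw [List.dropLast_concat, List.getLast?_concat]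
      simp only [Option.getD_some, ihp, hAB]
      rw [hsplit]
      simp

lemma claimB : ∀ u, Valid u →
    Valid (psi u) ∧ dag (psi u) = psi u ∧ leaves (psi u) + 1 = 2 * leaves u ∧ phi (psi u) = u := by
  refine ptree_ind _ ?_ ?_
  · intro _
    exact ⟨by rw [psi_leaf]; exact Valid.leaf, by rw [psi_leaf, dag_leaf],
      by rw [psi_leaf, leaves_leaf], by rw [psi_leaf, phi_leaf]⟩
  · intro us ih hv
    cases hv with
    | node _ hlen hall =>
    have hne : us ≠ [] := by intro h; subst h; simp at hlen
    set F := us.dropLast with hF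
    set la := us.getLast hne with hla
    have husp : us = F ++ [la] := (List.dropLast_append_getLast hne).symm
    have hlF : F.length = us.length - 1 := by simp [hF]
    have hget : us.getLast?.getD .leaf = la := by
      rw [List.getLast?_eq_getLast hne]; rfl
    have hlamem : la ∈ us := List.getLast_mem hne
    obtain ⟨ihv, ihd, ihl, ihp⟩ := ih la hlamem (hall la hlamem)
    have hpsi : psi (.node us) = .node (F ++ [psi la] ++ (F.map dag).reverse) := by
      rw [psi_node, hget, ← hF]
    have hFsub : ∀ x ∈ F, x ∈ us := fun x hx => List.dropLast_subset us hx
    refine ⟨?_, ?_, ?_, ?_⟩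
    · rw [hpsi]
      refine Valid.node _ (by simp [hlF]; omega) ?_
      intro x hx
      simp only [List.mem_append, List.mem_reverse, List.mem_map] at hx
      rcases hx with (h | h) | h
      · exact hall x (hFsub x h)
      · simp at h; subst h; exact ihv
      · obtain ⟨y, hy, rfl⟩ := h
        exact valid_dag y (hall y (hFsub y hy))
    · rw [hpsi, dag_node]
      congr 1
      simp only [List.map_append, List.map_reverse, List.reverse_append, List.reverse_reverse,
        List.map_map, List.map_cons, List.map_nil]
      rw [show dag ∘ dag = id from funext dag_dag, List.map_id, ihd]
      simp
    · rw [hpsi, leaves_node]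
      have : leaves (.node us) = (F.map leaves).sum + leaves la := by
        rw [leaves_node, husp]; simp
      rw [this]
      simp only [List.map_append, List.sum_append, hld]
      simp
      omega
    · rw [hpsi, phi_node]
      have hlen' : (F ++ [psi la] ++ (F.map dag).reverse).length = 2 * F.length + 1 := by
        simp; omega
      rw [hlen']
      have hdiv : (2 * F.length + 1) / 2 = F.length := by omega
      rw [hdiv]
      have htake : (F ++ [psi la] ++ (F.map dag).reverse).take F.length = F := by
        rw [List.append_assoc, List.take_left]
      have hgetD : (F ++ [psi la] ++ (F.map dag).reverse).getD F.length .leaf = psi la := by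
        rw [List.append_assoc, List.getD_eq_getElem _ _ (by simp)]
        rw [List.getElem_append_right le_rfl]
        simp
      rw [htake, hgetD, ihp, ← husp]

/-- `C n` is the number of planar rooted trees with `n+1` leaves in which
every internal vertex has at least two children. -/
noncomputable def C (n : ℕ) : ℕ := Nat.card {t : PTree // Valid t ∧ leaves t = n + 1}

/-- For n ≥ 0, the number of planar rooted trees with 2n+1 leaves invariant under
the dendriform involution equals the super Catalan number C n. -/
theorem card_involutive_odd_leaves (n : ℕ) :
    Nat.card {t : PTree // Valid t ∧ leaves t = 2 * n + 1 ∧ dag t = t} = C n := by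
  rw [C]
  exact Nat.card_congr
    { toFun := fun x => ⟨phi x.1, by
        obtain ⟨hv, hl, hd⟩ := x.2
        obtain ⟨h1, h2, -⟩ := claimA x.1 hv hd (by rw [hl]; exact ⟨n, by ring⟩)
        exact ⟨h1, by omega⟩⟩
      invFun := fun y => ⟨psi y.1, by
        obtain ⟨hv, hl⟩ := y.2
        obtain ⟨h1, h2, h3, -⟩ := claimB y.1 hv
        exact ⟨h1, by omega, h2⟩⟩
      left_inv := fun x => Subtype.ext (by
        obtain ⟨hv, hl, hd⟩ := x.2
        exact (claimA x.1 hv hd (by rw [hl]; exact ⟨n, by ring⟩)).2.2)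
      right_inv := fun y => Subtype.ext (claimB y.1 y.2.1).2.2.2 }
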